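/- arXiv:2511.03592 — 2 statements merged into one kernel-verified Lean document; each statement's English description precedes it below -/
import Mathlib

section
/- Let G be a connected bipartite graph with bipartition (A,B) that is P6-free, and let x be a vertex of G whose degree is maximum among all vertices of G. Then for every vertex x' ≠ x lying in the same part of the bipartition as x, there exists a vertex y in the opposite part such that y is adjacent to both x and x'. -/
open SimpleGraph

/-- `H`-free: `G` contains no induced subgraph isomorphic to `H`.
Graph embeddings (`↪g`) are exactly isomorphisms onto induced subgraphs. -/
def InducedFree {W V : Type*} (H : SimpleGraph W) (G : SimpleGraph V) : Prop :=
  IsEmpty (H ↪g G)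

private lemma bool_ne_trans {a b c : Bool} (h1 : a ≠ b) (h2 : b ≠ c) : a = c := by
  revert h1 h2; cases a <;> cases b <;> cases c <;> decide

private lemma dist_getVert_le {V : Type*} (G : SimpleGraph V) {u v : V}
    (p : G.Walk u v) (i : ℕ) (hconn : G.Connected) : G.dist u (p.getVert i) ≤ i := by
  induction p generalizing i with
  | nil => simp [SimpleGraph.Walk.getVert, SimpleGraph.dist_self]
  | cons h q ih =>
    cases i with
    | zero => simp [SimpleGraph.dist_self]
    | succ n =>
      rw [SimpleGraph.Walk.getVert_cons_succ]
      calc G.dist _ _ ≤ G.dist _ _ + G.dist _ _ := hconn.dist_triangle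
        _ ≤ 1 + n := by
            gcongr
            · exact (SimpleGraph.dist_eq_one_iff_adj.mpr h).le
            · exact ih n
        _ = n + 1 := by omega

private lemma dist_getVert_ge {V : Type*} (G : SimpleGraph V) {u v : V}
    (p : G.Walk u v) (i : ℕ) : G.dist (p.getVert i) v ≤ p.length - i := by
  induction p generalizing i with
  | nil => simp [SimpleGraph.Walk.getVert, SimpleGraph.dist_self]
  | cons h q ih =>
    cases i with
    | zero =>
      simpa using SimpleGraph.dist_le (SimpleGraph.Walk.cons h q)
    | succ n =>
      rw [SimpleGraph.Walk.getVert_cons_succ]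
      simpa using ih n


@[simp] private lemma cons_val_five {α : Type*} {m : ℕ} (x : α) (u : Fin (m + 5) → α) :
    Matrix.vecCons x u 5 = Matrix.vecHead (Matrix.vecTail (Matrix.vecTail (Matrix.vecTail (Matrix.vecTail u)))) :=
  rfl

set_option maxHeartbeats 1000000 in
set_option maxRecDepth 4000 in
private lemma build_p6 {V : Type*} {G : SimpleGraph V} {v0 v1 v2 v3 v4 v5 : V}
    (a01 : G.Adj v0 v1) (a12 : G.Adj v1 v2) (a23 : G.Adj v2 v3)
    (a34 : G.Adj v3 v4) (a45 : G.Adj v4 v5)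
    (n02 : ¬G.Adj v0 v2) (n03 : ¬G.Adj v0 v3) (n04 : ¬G.Adj v0 v4) (n05 : ¬G.Adj v0 v5)
    (n13 : ¬G.Adj v1 v3) (n14 : ¬G.Adj v1 v4) (n15 : ¬G.Adj v1 v5)
    (n24 : ¬G.Adj v2 v4) (n25 : ¬G.Adj v2 v5) (n35 : ¬G.Adj v3 v5)
    (e02 : v0 ≠ v2) (e03 : v0 ≠ v3) (e04 : v0 ≠ v4) (e05 : v0 ≠ v5)
    (e13 : v1 ≠ v3) (e14 : v1 ≠ v4) (e15 : v1 ≠ v5)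
    (e24 : v2 ≠ v4) (e25 : v2 ≠ v5) (e35 : v3 ≠ v5) :
    Nonempty (pathGraph 6 ↪g G) := by
  have a10 := a01.symm
  have a21 := a12.symm
  have a32 := a23.symm
  have a43 := a34.symm
  have a54 := a45.symm
  have n20 : ¬G.Adj v2 v0 := fun h => n02 h.symm
  have n30 : ¬G.Adj v3 v0 := fun h => n03 h.symm
  have n40 : ¬G.Adj v4 v0 := fun h => n04 h.symm
  have n50 : ¬G.Adj v5 v0 := fun h => n05 h.symm
  have n31 : ¬G.Adj v3 v1 := fun h => n13 h.symm
  have n41 : ¬G.Adj v4 v1 := fun h => n14 h.symm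
  have n51 : ¬G.Adj v5 v1 := fun h => n15 h.symm
  have n42 : ¬G.Adj v4 v2 := fun h => n24 h.symm
  have n52 : ¬G.Adj v5 v2 := fun h => n25 h.symm
  have n53 : ¬G.Adj v5 v3 := fun h => n35 h.symm
  have i00 : ¬G.Adj v0 v0 := G.irrefl
  have i11 : ¬G.Adj v1 v1 := G.irrefl
  have i22 : ¬G.Adj v2 v2 := G.irrefl
  have i33 : ¬G.Adj v3 v3 := G.irrefl
  have i44 : ¬G.Adj v4 v4 := G.irrefl
  have i55 : ¬G.Adj v5 v5 := G.irrefl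
  have e01 := a01.ne
  have e12 := a12.ne
  have e23 := a23.ne
  have e34 := a34.ne
  have e45 := a45.ne
  refine ⟨⟨⟨![v0,v1,v2,v3,v4,v5], ?_⟩, ?_⟩⟩
  · intro a b hab
    fin_cases a <;> fin_cases b <;> simp_all
  · intro a b
    show G.Adj (![v0,v1,v2,v3,v4,v5] a) (![v0,v1,v2,v3,v4,v5] b) ↔ _
    fin_cases a <;> fin_cases b <;>
      (try simp_all [SimpleGraph.pathGraph_adj]) <;> decide

theorem stmt_0 {V : Type*} [Fintype V] (G : SimpleGraph V) [DecidableRel G.Adj]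
    (c : V → Bool) (hbip : ∀ {u v : V}, G.Adj u v → c u ≠ c v)
    (hconn : G.Connected)
    (hP6 : InducedFree (pathGraph 6) G)
    (x : V) (hmax : ∀ v : V, G.degree v ≤ G.degree x)
    (x' : V) (hne : x' ≠ x) (hsame : c x' = c x) :
    ∃ y : V, c y ≠ c x ∧ G.Adj x y ∧ G.Adj x' y := by
  set d := G.dist x x' with hd
  have hdpos : d ≠ 0 := by
    rw [hd, (hconn.dist_eq_zero_iff).ne]
    exact fun h => hne h.symm
  obtain ⟨p, hp⟩ := hconn.exists_walk_length_eq_dist x x'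
  have hdistv : ∀ i, i ≤ d → G.dist x (p.getVert i) = i := by
    intro i hi
    have h1 := dist_getVert_le G p i hconn
    have h2 := dist_getVert_ge G p i
    rw [hp, ← hd] at h2
    have h3 : d ≤ G.dist x (p.getVert i) + G.dist (p.getVert i) x' := hconn.dist_triangle
    omega
  have hadjv : ∀ i, i < d → G.Adj (p.getVert i) (p.getVert (i+1)) := by
    intro i hi
    exact p.adj_getVert_succ (by omega)
  by_cases hd1 : d = 1
  · exact absurd (hbip (show G.Adj x x' by
      have := hadjv 0 (by omega)
      rwa [p.getVert_zero, show (0:ℕ)+1 = p.length by omega, p.getVert_length] at this))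
      (by simp [hsame])
  by_cases hd2 : d = 2
  · refine ⟨p.getVert 1, ?_, ?_, ?_⟩
    · have := hbip (hadjv 0 (by omega)); rw [p.getVert_zero] at this; exact this.symm
    · have := hadjv 0 (by omega); rwa [p.getVert_zero] at this
    · have h1 := hadjv 1 (by omega)
      rw [show (1:ℕ)+1 = p.length by omega, p.getVert_length] at h1
      exact h1.symm
  by_cases hd3 : d = 3
  · exfalso
    have h0 := hbip (hadjv 0 (by omega))
    have h1 := hbip (hadjv 1 (by omega))
    have h2 := hbip (hadjv 2 (by omega))
    rw [p.getVert_zero] at h0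
    rw [show (2:ℕ)+1 = p.length by omega, p.getVert_length] at h2
    have e02 : c x = c (p.getVert 2) := bool_ne_trans h0 h1
    exact h2 (by rw [← e02, ← hsame])
  -- main case : d ≥ 4
  exfalso
  have hd4 : 4 ≤ d := by omega
  set v1 := p.getVert 1 with hv1
  set v2 := p.getVert 2 with hv2
  set v3 := p.getVert 3 with hv3
  set v4 := p.getVert 4 with hv4
  have D1 : G.dist x v1 = 1 := hdistv 1 (by omega)
  have D2 : G.dist x v2 = 2 := hdistv 2 (by omega)
  have D3 : G.dist x v3 = 3 := hdistv 3 (by omega)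
  have D4 : G.dist x v4 = 4 := hdistv 4 (by omega)
  have a01 : G.Adj x v1 := by have := hadjv 0 (by omega); rwa [p.getVert_zero] at this
  have a12 : G.Adj v1 v2 := hadjv 1 (by omega)
  have a23 : G.Adj v2 v3 := hadjv 2 (by omega)
  have a34 : G.Adj v3 v4 := hadjv 3 (by omega)
  -- adjacency bounds distance
  have hstep : ∀ {a b : V}, G.Adj a b → G.dist x b ≤ G.dist x a + 1 := by
    intro a b hab
    calc G.dist x b ≤ G.dist x a + G.dist a b := hconn.dist_triangle
      _ ≤ G.dist x a + 1 := by rw [SimpleGraph.dist_eq_one_iff_adj.mpr hab]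
  have dxx : G.dist x x = 0 := SimpleGraph.dist_self
  -- nonadjacencies among x, v1, v2, v3, v4
  have n02 : ¬ G.Adj x v2 := fun h => by have := hstep h; omega
  have n03 : ¬ G.Adj x v3 := fun h => by have := hstep h; omega
  have n04 : ¬ G.Adj x v4 := fun h => by have := hstep h; omega
  have n13 : ¬ G.Adj v1 v3 := fun h => by have := hstep h; omega
  have n14 : ¬ G.Adj v1 v4 := fun h => by have := hstep h; omega
  have n24 : ¬ G.Adj v2 v4 := fun h => by have := hstep h; omega
  -- find a neighbor y of x not adjacent to v2
  have hy : ∃ y : V, G.Adj x y ∧ ¬ G.Adj y v2 := by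
    by_contra hcon
    push_neg at hcon
    have hsub : G.neighborFinset x ⊆ G.neighborFinset v2 := by
      intro y hy
      rw [SimpleGraph.mem_neighborFinset] at *
      exact (hcon y hy).symm
    have hv3mem : v3 ∈ G.neighborFinset v2 := (SimpleGraph.mem_neighborFinset _ _ _).mpr a23
    have hv3not : v3 ∉ G.neighborFinset x := fun h =>
      n03 ((SimpleGraph.mem_neighborFinset _ _ _).mp h)
    have hlt : G.degree x < G.degree v2 := by
      rw [SimpleGraph.degree, SimpleGraph.degree]
      exact Finset.card_lt_card (hsub.ssubset_of_ne (fun he => hv3not (he ▸ hv3mem)))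
    exact absurd (hmax v2) (by omega)
  obtain ⟨y, hxy, hyv2⟩ := hy
  have dy : G.dist x y = 1 := SimpleGraph.dist_eq_one_iff_adj.mpr hxy
  have ny3 : ¬ G.Adj y v3 := fun h => by have := hstep h; omega
  have ny4 : ¬ G.Adj y v4 := fun h => by have := hstep h; omega
  have ny1 : ¬ G.Adj y v1 := fun h =>
    (hbip h) (bool_ne_trans (hbip hxy).symm (hbip a01))
  have nyx : G.Adj y x := hxy.symm
  -- pairwise distinct
  have eyx : y ≠ x := hxy.ne'
  have ey1 : y ≠ v1 := fun h => hyv2 (h ▸ a12)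
  have ey2 : y ≠ v2 := fun h => by rw [h] at dy; omega
  have ey3 : y ≠ v3 := fun h => by rw [h] at dy; omega
  have ey4 : y ≠ v4 := fun h => by rw [h] at dy; omega
  have ex1 : x ≠ v1 := a01.ne
  have ex2 : x ≠ v2 := fun h => by rw [← h] at D2; omega
  have ex3 : x ≠ v3 := fun h => by rw [← h] at D3; omega
  have ex4 : x ≠ v4 := fun h => by rw [← h] at D4; omega
  have e12 : v1 ≠ v2 := a12.ne
  have e13 : v1 ≠ v3 := fun h => by rw [h] at D1; omega
  have e14 : v1 ≠ v4 := fun h => by rw [h] at D1; omega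
  have e23 : v2 ≠ v3 := a23.ne
  have e24 : v2 ≠ v4 := fun h => by rw [h] at D2; omega
  have e34 : v3 ≠ v4 := a34.ne
  -- build the induced P6 embedding
  obtain ⟨emb⟩ := build_p6 nyx a01 a12 a23 a34
    ny1 hyv2 ny3 ny4 n02 n03 n04 n13 n14 n24
    ey1 ey2 ey3 ey4 ex2 ex3 ex4 e13 e14 e24
  exact hP6.false emb
end

section
/- Let G be a connected bipartite graph with bipartition (A,B), with at least two vertices, that is P6-free and contains no heart-vertex. Then G contains an induced path on 5 vertices. -/
open SimpleGraph

lemma walk_split {V : Type*} {G : SimpleGraph V} {u v : V} (p : G.Walk u v) (i : ℕ) :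
    ∃ (q : G.Walk u (p.getVert i)) (r : G.Walk (p.getVert i) v),
      q.length = min i p.length ∧ q.length + r.length = p.length := by
  induction p generalizing i with
  | nil => exact ⟨.nil, .nil, by simp, by simp⟩
  | @cons a b c h q ih =>
    cases i with
    | zero => exact ⟨.nil, .cons h q, rfl, by show 0 + (q.length + 1) = q.length + 1; omega⟩
    | succ i =>
      obtain ⟨q', r', hl, hs⟩ := ih i
      refine ⟨.cons h q', r', ?_, ?_⟩
      · change q'.length + 1 = min (i+1) (q.length+1); omega
      · change q'.length + 1 + r'.length = q.length + 1; omega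

lemma shortest_ne {V : Type*} {G : SimpleGraph V} {u v : V} {p : G.Walk u v}
    (hp : p.length = G.dist u v) {i j : ℕ} (hij : i < j) (hj : j ≤ p.length) :
    p.getVert i ≠ p.getVert j := by
  intro heq
  obtain ⟨qi, ri, hqi, hsi⟩ := walk_split p i
  obtain ⟨qj, rj, hqj, hsj⟩ := walk_split p j
  have hd := G.dist_le (qi.append (rj.copy heq.symm rfl))
  rw [Walk.length_append, Walk.length_copy] at hd
  omega

lemma shortest_not_adj {V : Type*} {G : SimpleGraph V} {u v : V} {p : G.Walk u v}
    (hp : p.length = G.dist u v) {i j : ℕ} (hij : i + 1 < j) (hj : j ≤ p.length) :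
    ¬ G.Adj (p.getVert i) (p.getVert j) := by
  intro hadj
  obtain ⟨qi, ri, hqi, hsi⟩ := walk_split p i
  obtain ⟨qj, rj, hqj, hsj⟩ := walk_split p j
  have hd := G.dist_le (qi.append (Walk.cons hadj rj))
  rw [Walk.length_append, Walk.length_cons] at hd
  omega

lemma mkP5 {V : Type*} {G : SimpleGraph V} {a b c d e : V}
    (h1 : G.Adj a b) (h2 : G.Adj b c) (h3 : G.Adj c d) (h4 : G.Adj d e)
    (n1 : ¬G.Adj a c) (n2 : ¬G.Adj a d) (n3 : ¬G.Adj a e)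
    (n4 : ¬G.Adj b d) (n5 : ¬G.Adj b e) (n6 : ¬G.Adj c e)
    (d1 : a ≠ c) (d2 : a ≠ d) (d3 : a ≠ e) (d4 : b ≠ d) (d5 : b ≠ e) (d6 : c ≠ e) :
    Nonempty (pathGraph 5 ↪g G) := by
  have h1' := h1.symm; have h2' := h2.symm; have h3' := h3.symm; have h4' := h4.symm
  have n1' : ¬G.Adj c a := fun h => n1 h.symm
  have n2' : ¬G.Adj d a := fun h => n2 h.symm
  have n3' : ¬G.Adj e a := fun h => n3 h.symm
  have n4' : ¬G.Adj d b := fun h => n4 h.symm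
  have n5' : ¬G.Adj e b := fun h => n5 h.symm
  have n6' : ¬G.Adj e c := fun h => n6 h.symm
  have e1 := h1.ne; have e2 := h2.ne; have e3 := h3.ne; have e4 := h4.ne
  have e1' := h1.ne'; have e2' := h2.ne'; have e3' := h3.ne'; have e4' := h4.ne'
  have d1' := d1.symm; have d2' := d2.symm; have d3' := d3.symm
  have d4' := d4.symm; have d5' := d5.symm; have d6' := d6.symm
  refine ⟨⟨⟨![a,b,c,d,e], ?_⟩, ?_⟩⟩
  · intro i j hij
    fin_cases i <;> fin_cases j <;> simp_all
  · intro i j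
    fin_cases i <;> fin_cases j <;>
      simp [pathGraph_adj, G.irrefl, show ((3:Fin 5):ℕ)=3 from rfl, show ((4:Fin 5):ℕ)=4 from rfl] <;> assumption

theorem stmt_10 {V : Type*} [Fintype V] (G : SimpleGraph V)
    (c : V → Bool) (hbip : ∀ {u v : V}, G.Adj u v → c u ≠ c v)
    (hconn : G.Connected)
    (hcard : 2 ≤ Fintype.card V)
    (hP6 : InducedFree (pathGraph 6) G)
    (hnoheart : ¬ ∃ x : V, ∀ y : V, c y ≠ c x → G.Adj x y) :
    Nonempty (pathGraph 5 ↪g G) := by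
  classical
  by_contra hno
  push_neg at hnoheart
  have hV : Nonempty V := Fintype.card_pos_iff.mp (by omega)
  obtain ⟨y, -, hy⟩ := Finset.exists_max_image Finset.univ (fun v => G.degree v)
    ⟨hV.some, Finset.mem_univ _⟩
  obtain ⟨b, hcb, hyb⟩ := hnoheart y
  have hreach : G.Reachable y b := hconn y b
  obtain ⟨p, hp⟩ := hreach.exists_walk_length_eq_dist
  have hyb' : y ≠ b := fun h => hcb (h ▸ rfl)
  have hd0 : G.dist y b ≠ 0 := by
    rw [Ne, dist_eq_zero_iff_eq_or_not_reachable]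
    push_neg
    exact ⟨hyb', hreach⟩
  have hd1 : G.dist y b ≠ 1 := fun h => hyb (dist_eq_one_iff_adj.mp h)
  have baux : ∀ u v w : Bool, u ≠ v → w ≠ v → u = w := by decide
  have h0 : p.getVert 0 = y := p.getVert_zero
  have hblen : p.getVert p.length = b := p.getVert_length
  have hd2 : G.dist y b ≠ 2 := by
    intro h2
    have hl : p.length = 2 := by rw [hp, h2]
    have a1 : G.Adj (p.getVert 0) (p.getVert 1) := p.adj_getVert_succ (by omega)
    have a2 : G.Adj (p.getVert 1) (p.getVert 2) := p.adj_getVert_succ (by omega)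
    rw [h0] at a1
    have hb2 : p.getVert 2 = b := by rw [← hl]; exact hblen
    rw [hb2] at a2
    exact hbip a2 (baux _ _ _ (Ne.symm (hbip a1)) hcb)
  by_cases hd4 : 4 ≤ G.dist y b
  · have hlen : 4 ≤ p.length := by omega
    have a01 : G.Adj (p.getVert 0) (p.getVert 1) := p.adj_getVert_succ (by omega)
    have a12 : G.Adj (p.getVert 1) (p.getVert 2) := p.adj_getVert_succ (by omega)
    have a23 : G.Adj (p.getVert 2) (p.getVert 3) := p.adj_getVert_succ (by omega)
    have a34 : G.Adj (p.getVert 3) (p.getVert 4) := p.adj_getVert_succ (by omega)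
    exact hno (mkP5 a01 a12 a23 a34
      (shortest_not_adj hp (by omega) (by omega))
      (shortest_not_adj hp (by omega) (by omega))
      (shortest_not_adj hp (by omega) (by omega))
      (shortest_not_adj hp (by omega) (by omega))
      (shortest_not_adj hp (by omega) (by omega))
      (shortest_not_adj hp (by omega) (by omega))
      (shortest_ne hp (by omega) (by omega))
      (shortest_ne hp (by omega) (by omega))
      (shortest_ne hp (by omega) (by omega))
      (shortest_ne hp (by omega) (by omega))
      (shortest_ne hp (by omega) (by omega))
      (shortest_ne hp (by omega) (by omega)))
  · have hd3 : G.dist y b = 3 := by omega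
    have hl : p.length = 3 := by rw [hp, hd3]
    set x := p.getVert 1 with hx
    set a := p.getVert 2 with ha
    have hb3 : p.getVert 3 = b := by rw [← hl]; exact hblen
    have ayx : G.Adj y x := by
      have := p.adj_getVert_succ (i := 0) (by omega); rwa [h0] at this
    have axa : G.Adj x a := p.adj_getVert_succ (by omega)
    have aab : G.Adj a b := by
      have := p.adj_getVert_succ (i := 2) (by omega)
      rwa [show (2:ℕ)+1 = 3 from rfl, hb3] at this
    have nya : ¬ G.Adj y a := by
      have := shortest_not_adj hp (i := 0) (j := 2) (by omega) (by omega)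
      rwa [h0] at this
    have nxb : ¬ G.Adj x b := by
      have := shortest_not_adj hp (i := 1) (j := 3) (by omega) (by omega)
      rwa [hb3] at this
    have ney_a : y ≠ a := by
      have := shortest_ne hp (i := 0) (j := 2) (by omega) (by omega)
      rwa [h0] at this
    have nex_b : x ≠ b := by
      have := shortest_ne hp (i := 1) (j := 3) (by omega) (by omega)
      rwa [hb3] at this
    have hsub : ∀ z, G.Adj y z → G.Adj a z := by
      intro z hz
      by_contra hza
      by_cases hzx : z = x
      · exact hza (hzx ▸ axa.symm)
      · have czx : c z = c x := baux _ _ _ (Ne.symm (hbip hz)) (Ne.symm (hbip ayx))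
        have cbx : c b = c x := baux _ _ _ (Ne.symm (hbip aab)) (hbip axa)
        exact hno (mkP5 hz.symm ayx axa aab
          (fun h => hbip h czx)
          (fun h => hza h.symm)
          (fun h => hbip h (czx.trans cbx.symm))
          nya hyb nxb
          hzx
          (fun h => hbip axa (czx.symm.trans (congrArg c h)))
          (fun h => hyb (h ▸ hz))
          ney_a hyb' nex_b)
    have hss : G.neighborFinset y ⊂ G.neighborFinset a := by
      rw [Finset.ssubset_iff_of_subset]
      · exact ⟨b, (mem_neighborFinset _ _ _).mpr aab, fun hb =>
          hyb ((mem_neighborFinset _ _ _).mp hb)⟩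
      · intro z hz
        rw [mem_neighborFinset] at *
        exact hsub z hz
    have hcardlt := Finset.card_lt_card hss
    have h1 := hy a (Finset.mem_univ a)
    simp only [degree] at *
    omega
end
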